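/- arXiv:2310.11946 — 4 statements merged into one kernel-verified Lean document; each statement's English description precedes it below -/
import Mathlib

section
/- For every integer n ≥ 2 and every ε with 0 ≤ ε ≤ (2−√2)/4, the biseparable n-qubit pure state |ψ_n⟩ = ½(|0⟩ + e^{iπ/4}|1⟩) ⊗ (|0⟩^{⊗(n−1)} + e^{−iπ/4}|1⟩^{⊗(n−1)}), together with the observables A₀⁽¹⁾ = (1−2ε)X + 2√(ε(1−ε))Y and A₁⁽¹⁾ = (1−2ε)Y + 2√(ε(1−ε))X on party 1 and A₀⁽ʲ⁾ = X, A₁⁽ʲ⁾ = Y on every party j = 2,…,n, yields the Mermin expectation value ⟨ψ_n|M_n|ψ_n⟩ = 2^{n−2}·(1 − 2ε + 2√(ε(1−ε))). -/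
open Matrix Complex
open scoped ComplexOrder

noncomputable section

/-- 2×2 complex matrices (single-qubit operators). -/
abbrev QubitMat := Matrix (Fin 2) (Fin 2) ℂ

def PauliX : QubitMat := !![0, 1; 1, 0]
def PauliY : QubitMat := !![0, -Complex.I; Complex.I, 0]
def PauliZ : QubitMat := !![1, 0; 0, -1]

/-- Operators on (ℂ²)^{⊗n}, with the tensor factors indexed by `Fin n`
    (the entry indices are functions `Fin n → Fin 2`). -/
abbrev NMat (n : ℕ) := Matrix (Fin n → Fin 2) (Fin n → Fin 2) ℂ

/-- The 2×2 matrix `A` acting on the `j`-th tensor factor of (ℂ²)^{⊗n},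
    padded with the identity on all other factors (Kronecker product). -/
def pad (n : ℕ) (j : Fin n) (A : QubitMat) : NMat n :=
  fun f g => A (f j) (g j) * ∏ i ∈ Finset.univ.erase j, (if f i = g i then (1 : ℂ) else 0)

/-- The Mermin recursion `M_k, N_k` for the block of parties `a, a+1, …, a+k−1`
    (0-based), with `M_0 = 1, N_0 = 0`; so `M_1 = A₀⁽ᵃ⁾`, `N_1 = A₁⁽ᵃ⁾`, and
    `M_k = M_{k−1}A₀ − N_{k−1}A₁`, `N_k = M_{k−1}A₁ + N_{k−1}A₀`. -/
def blockPair {n : ℕ} (A : Fin n → Fin 2 → QubitMat) (a : ℕ) : ℕ → NMat n × NMat n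
  | 0 => (1, 0)
  | k + 1 =>
    let P := blockPair A a k
    if h : a + k < n then
      (P.1 * pad n ⟨a + k, h⟩ (A ⟨a + k, h⟩ 0) - P.2 * pad n ⟨a + k, h⟩ (A ⟨a + k, h⟩ 1),
        P.1 * pad n ⟨a + k, h⟩ (A ⟨a + k, h⟩ 1) + P.2 * pad n ⟨a + k, h⟩ (A ⟨a + k, h⟩ 0))
    else P

/-- The Mermin operator `M_n` built from the observables `A j 0`, `A j 1`. -/
def merminM {n : ℕ} (A : Fin n → Fin 2 → QubitMat) : NMat n := (blockPair A 0 n).1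

/-- The companion operator `N_n`. -/
def merminN {n : ℕ} (A : Fin n → Fin 2 → QubitMat) : NMat n := (blockPair A 0 n).2

/-- A dichotomic qubit observable: Hermitian with `A² = I`. -/
def IsDichotomic (A : QubitMat) : Prop := A.IsHermitian ∧ A * A = 1

/-- A quantum state: positive semidefinite with unit trace. -/
def IsState {n : ℕ} (ρ : NMat n) : Prop := ρ.PosSemidef ∧ ρ.trace = 1

/-- The rank-one projector |ψ⟩⟨ψ| associated to a vector ψ. -/
def pureMat {n : ℕ} (ψ : (Fin n → Fin 2) → ℂ) : NMat n := Matrix.vecMulVec ψ (star ψ)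

def IsUnitVec {n : ℕ} (ψ : (Fin n → Fin 2) → ℂ) : Prop := ∑ f, Complex.normSq (ψ f) = 1

/-- A pure state is biseparable if it is a product across some nontrivial
    bipartition S | Sᶜ of the parties. -/
def PureBisep {n : ℕ} (ψ : (Fin n → Fin 2) → ℂ) : Prop :=
  ∃ S : Finset (Fin n), S.Nonempty ∧ S ≠ Finset.univ ∧
    ∃ (φ : ({i : Fin n // i ∈ S} → Fin 2) → ℂ) (χ : ({i : Fin n // i ∉ S} → Fin 2) → ℂ),
      ∀ f, ψ f = φ (fun i => f i.1) * χ (fun i => f i.1)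

/-- A mixed state is biseparable if it is a convex combination of pure
    biseparable states. -/
def IsBiseparable {n : ℕ} (ρ : NMat n) : Prop :=
  ∃ (m : ℕ) (w : Fin m → ℝ) (ψ : Fin m → ((Fin n → Fin 2) → ℂ)),
    (∀ i, 0 ≤ w i) ∧ (∑ i, w i = 1) ∧ (∀ i, IsUnitVec (ψ i)) ∧ (∀ i, PureBisep (ψ i)) ∧
    ρ = ∑ i, (w i : ℂ) • pureMat (ψ i)

/-- The expectation value ⟨ψ|M|ψ⟩. -/
def expectVal {n : ℕ} (ψ : (Fin n → Fin 2) → ℂ) (M : NMat n) : ℂ :=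
  star ψ ⬝ᵥ (M *ᵥ ψ)

-- ## auxiliary machinery

def tensorMat {n : ℕ} (B : Fin n → QubitMat) : NMat n :=
  fun f g => ∏ j, B j (f j) (g j)

lemma tensorMat_one {n : ℕ} : tensorMat (fun _ : Fin n => (1 : QubitMat)) = 1 := by
  ext f g
  simp only [tensorMat, Matrix.one_apply, Finset.prod_boole]
  by_cases h : f = g
  · simp [h]
  · rw [if_neg h, if_neg]
    simp only [funext_iff] at h
    push_neg at h ⊢
    obtain ⟨j, hj⟩ := h
    exact ⟨j, Finset.mem_univ j, hj⟩

lemma tensorMat_mul {n : ℕ} (B C : Fin n → QubitMat) :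
    tensorMat B * tensorMat C = tensorMat (fun j => B j * C j) := by
  ext f g
  simp only [tensorMat, Matrix.mul_apply]
  rw [show (fun h : Fin n → Fin 2 => (∏ j, B j (f j) (h j)) * ∏ j, C j (h j) (g j))
      = fun h => ∏ j, (B j (f j) (h j) * C j (h j) (g j)) from
    funext fun h => (Finset.prod_mul_distrib).symm]
  rw [Finset.prod_univ_sum, Fintype.piFinset_univ]

lemma pad_eq {n : ℕ} (j : Fin n) (A : QubitMat) :
    pad n j A = tensorMat (Function.update (fun _ => (1 : QubitMat)) j A) := by
  ext f g
  simp only [pad, tensorMat]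
  rw [← Finset.mul_prod_erase _ _ (Finset.mem_univ j), Function.update_self]
  congr 1
  refine Finset.prod_congr rfl fun i hi => ?_
  rw [Function.update_of_ne (Finset.ne_of_mem_erase hi), Matrix.one_apply]

def Pp {n : ℕ} (A : Fin n → Fin 2 → QubitMat) (k : ℕ) : NMat n :=
  tensorMat (fun j => if (j : ℕ) < k then A j 0 + Complex.I • A j 1 else 1)
def Pm {n : ℕ} (A : Fin n → Fin 2 → QubitMat) (k : ℕ) : NMat n :=
  tensorMat (fun j => if (j : ℕ) < k then A j 0 - Complex.I • A j 1 else 1)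

lemma Pp_succ {n : ℕ} (A : Fin n → Fin 2 → QubitMat) (k : ℕ) (h : k < n) :
    Pp A (k + 1) = Pp A k * pad n ⟨k, h⟩ (A ⟨k, h⟩ 0 + Complex.I • A ⟨k, h⟩ 1) := by
  rw [Pp, Pp, pad_eq, tensorMat_mul]
  refine congrArg tensorMat (funext fun j => ?_)
  rcases lt_trichotomy (j : ℕ) k with hj | hj | hj
  · have hne : j ≠ ⟨k, h⟩ := by intro hh; rw [hh] at hj; simp at hj
    rw [Function.update_of_ne hne, if_pos (by omega), if_pos hj, mul_one]
  · have hje : j = ⟨k, h⟩ := Fin.ext (by simpa using hj)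
    subst hje
    simp only [Function.update_self, Fin.val_mk]
    rw [if_pos (by omega), if_neg (by omega), one_mul]
  · have hne : j ≠ ⟨k, h⟩ := by intro hh; rw [hh] at hj; simp at hj
    rw [Function.update_of_ne hne, if_neg (by omega), if_neg (by omega), mul_one]

lemma Pm_succ {n : ℕ} (A : Fin n → Fin 2 → QubitMat) (k : ℕ) (h : k < n) :
    Pm A (k + 1) = Pm A k * pad n ⟨k, h⟩ (A ⟨k, h⟩ 0 - Complex.I • A ⟨k, h⟩ 1) := by
  rw [Pm, Pm, pad_eq, tensorMat_mul]
  refine congrArg tensorMat (funext fun j => ?_)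
  rcases lt_trichotomy (j : ℕ) k with hj | hj | hj
  · have hne : j ≠ ⟨k, h⟩ := by intro hh; rw [hh] at hj; simp at hj
    rw [Function.update_of_ne hne, if_pos (by omega), if_pos hj, mul_one]
  · have hje : j = ⟨k, h⟩ := Fin.ext (by simpa using hj)
    subst hje
    simp only [Function.update_self, Fin.val_mk]
    rw [if_pos (by omega), if_neg (by omega), one_mul]
  · have hne : j ≠ ⟨k, h⟩ := by intro hh; rw [hh] at hj; simp at hj
    rw [Function.update_of_ne hne, if_neg (by omega), if_neg (by omega), mul_one]

lemma pad_add_smul {n : ℕ} (j : Fin n) (X Y : QubitMat) :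
    pad n j (X + Complex.I • Y) = pad n j X + Complex.I • pad n j Y := by
  ext f g; simp [pad, Matrix.add_apply]; ring
lemma pad_sub_smul {n : ℕ} (j : Fin n) (X Y : QubitMat) :
    pad n j (X - Complex.I • Y) = pad n j X - Complex.I • pad n j Y := by
  ext f g; simp [pad, Matrix.sub_apply]; ring

lemma blockPair_formula {n : ℕ} (A : Fin n → Fin 2 → QubitMat) (k : ℕ) (hk : k ≤ n) :
    Pp A k = (blockPair A 0 k).1 + Complex.I • (blockPair A 0 k).2 ∧
    Pm A k = (blockPair A 0 k).1 - Complex.I • (blockPair A 0 k).2 := by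
  induction k with
  | zero =>
    have h1 : Pp A 0 = 1 := by
      rw [Pp, show (fun j : Fin n => if (j:ℕ) < 0 then A j 0 + Complex.I • A j 1 else 1)
        = fun _ => (1 : QubitMat) from funext fun j => if_neg (by omega)]
      exact tensorMat_one
    have h2 : Pm A 0 = 1 := by
      rw [Pm, show (fun j : Fin n => if (j:ℕ) < 0 then A j 0 - Complex.I • A j 1 else 1)
        = fun _ => (1 : QubitMat) from funext fun j => if_neg (by omega)]
      exact tensorMat_one
    rw [show blockPair A 0 0 = ((1 : NMat n), (0 : NMat n)) from rfl, h1, h2]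
    constructor <;> simp
  | succ k ih =>
    obtain ⟨ihp, ihm⟩ := ih (by omega)
    have hkn : k < n := by omega
    have h0k : 0 + k < n := by omega
    have hidx : (⟨0 + k, h0k⟩ : Fin n) = ⟨k, hkn⟩ := Fin.ext (by simp)
    have hbp : blockPair A 0 (k + 1) =
        ((blockPair A 0 k).1 * pad n ⟨k, hkn⟩ (A ⟨k, hkn⟩ 0)
          - (blockPair A 0 k).2 * pad n ⟨k, hkn⟩ (A ⟨k, hkn⟩ 1),
         (blockPair A 0 k).1 * pad n ⟨k, hkn⟩ (A ⟨k, hkn⟩ 1)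
          + (blockPair A 0 k).2 * pad n ⟨k, hkn⟩ (A ⟨k, hkn⟩ 0)) := by
      rw [blockPair]
      simp only [dif_pos h0k, hidx]
    have hII : ∀ Z : NMat n, Complex.I • Complex.I • Z = -Z := fun Z => by
      rw [smul_smul, Complex.I_mul_I, neg_one_smul]
    constructor
    · rw [Pp_succ A k hkn, pad_add_smul, ihp, hbp]
      simp only [mul_add, add_mul, mul_smul_comm, smul_mul_assoc, smul_add, smul_sub, hII]
      module
    · rw [Pm_succ A k hkn, pad_sub_smul, ihm, hbp]
      simp only [mul_add, mul_sub, add_mul, sub_mul, mul_smul_comm, smul_mul_assoc,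
        smul_add, smul_sub, hII]
      module

lemma pauliP : PauliX + Complex.I • PauliY = !![0, 2; 0, 0] := by
  ext i j
  fin_cases i <;> fin_cases j <;>
    simp [PauliX, PauliY] <;> ring_nf <;> simp [Complex.I_sq]

lemma pauliM : PauliX - Complex.I • PauliY = !![0, 0; 2, 0] := by
  ext i j
  fin_cases i <;> fin_cases j <;>
    simp [PauliX, PauliY] <;> ring_nf <;> simp [Complex.I_sq]

lemma tiltP (a b : ℝ) :
    (((a:ℂ)) • PauliX + ((b:ℂ)) • PauliY) + Complex.I • (((a:ℂ)) • PauliY + ((b:ℂ)) • PauliX)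
      = !![0, 2 * (a:ℂ); 2 * Complex.I * (b:ℂ), 0] := by
  ext i j
  fin_cases i <;> fin_cases j <;>
    simp [PauliX, PauliY] <;> ring_nf <;> simp [Complex.I_sq] <;> ring

lemma tiltM (a b : ℝ) :
    (((a:ℂ)) • PauliX + ((b:ℂ)) • PauliY) - Complex.I • (((a:ℂ)) • PauliY + ((b:ℂ)) • PauliX)
      = !![0, -2 * Complex.I * (b:ℂ); 2 * (a:ℂ), 0] := by
  ext i j
  fin_cases i <;> fin_cases j <;>
    simp [PauliX, PauliY] <;> ring_nf <;> simp [Complex.I_sq] <;> ring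

/-- the biseparable state
    |ψ_n⟩ = ½(|0⟩ + e^{iπ/4}|1⟩) ⊗ (|0⟩^{⊗(n−1)} + e^{−iπ/4}|1⟩^{⊗(n−1)}),
    with maximally tilted observables on party 1 and exact X, Y on the other
    parties, saturates the imprecision-corrected biseparable bound. -/
theorem mermin_imprecise_bound_saturation
    (n : ℕ) (hn : 2 ≤ n) (ε : ℝ) (hε0 : 0 ≤ ε)
    (hε1 : ε ≤ (2 - Real.sqrt 2) / 4)
    (ψ : (Fin n → Fin 2) → ℂ)
    (hψ : ∀ f, ψ f = (1 / 2 : ℂ) *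
      (if f ⟨0, by omega⟩ = 0 then 1
        else Complex.exp ((Real.pi / 4 : ℝ) * Complex.I)) *
      (if ∀ j : Fin n, (j : ℕ) ≠ 0 → f j = 0 then 1
        else if ∀ j : Fin n, (j : ℕ) ≠ 0 → f j = 1 then
          Complex.exp (-(Real.pi / 4 : ℝ) * Complex.I)
        else 0))
    (A : Fin n → Fin 2 → QubitMat)
    (hA00 : A ⟨0, by omega⟩ 0 =
      ((1 - 2 * ε : ℝ) : ℂ) • PauliX + ((2 * Real.sqrt (ε * (1 - ε)) : ℝ) : ℂ) • PauliY)
    (hA01 : A ⟨0, by omega⟩ 1 =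
      ((1 - 2 * ε : ℝ) : ℂ) • PauliY + ((2 * Real.sqrt (ε * (1 - ε)) : ℝ) : ℂ) • PauliX)
    (hAX : ∀ j : Fin n, (j : ℕ) ≠ 0 → A j 0 = PauliX)
    (hAY : ∀ j : Fin n, (j : ℕ) ≠ 0 → A j 1 = PauliY) :
    expectVal ψ (merminM A) =
      (((2 : ℝ) ^ (n - 2) * (1 - 2 * ε + 2 * Real.sqrt (ε * (1 - ε))) : ℝ) : ℂ) := by
  
  have hn0 : 0 < n := by omega
  have hn1 : 1 < n := by omega
  set α : ℝ := 1 - 2 * ε with hα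
  set β : ℝ := 2 * Real.sqrt (ε * (1 - ε)) with hβ
  set ep : ℂ := Complex.exp ((Real.pi / 4 : ℝ) * Complex.I) with hep
  set em : ℂ := Complex.exp (-(Real.pi / 4 : ℝ) * Complex.I) with hem
  set v : Fin 2 → Fin 2 → (Fin n → Fin 2) := fun y c j => if (j : ℕ) = 0 then y else c
    with hvdef
  -- complex exponential facts
  have hpm : ep * em = 1 := by
    rw [hep, hem, ← Complex.exp_add]
    norm_num [Complex.exp_zero]
  have hmm : em * em = -Complex.I := by
    rw [hem, ← Complex.exp_add, show (-(Real.pi / 4 : ℝ) * Complex.I + -(Real.pi / 4 : ℝ) * Complex.I)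
      = (↑(-(Real.pi/2)) : ℂ) * Complex.I by push_cast; ring]
    rw [Complex.exp_mul_I]
    push_cast [← Complex.ofReal_cos, ← Complex.ofReal_sin]
    simp [Real.cos_pi_div_two, Real.sin_pi_div_two]
  have hpp : ep * ep = Complex.I := by
    rw [hep, ← Complex.exp_add, show ((Real.pi / 4 : ℝ) * Complex.I + (Real.pi / 4 : ℝ) * Complex.I)
      = (↑(Real.pi/2) : ℂ) * Complex.I by push_cast; ring]
    rw [Complex.exp_mul_I]
    push_cast [← Complex.ofReal_cos, ← Complex.ofReal_sin]
    simp [Real.cos_pi_div_two, Real.sin_pi_div_two]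
  have hcep : (starRingEnd ℂ) ep = em := by
    rw [hep, hem, ← Complex.exp_conj]
    congr 1
    rw [_root_.map_mul, Complex.conj_ofReal, Complex.conj_I]
    push_cast
    ring
  have hcem : (starRingEnd ℂ) em = ep := by
    rw [hep, hem, ← Complex.exp_conj]
    congr 1
    rw [_root_.map_mul, map_neg, Complex.conj_ofReal, Complex.conj_I]
    push_cast
    ring
  -- values of ψ on the basis vectors v y c
  have hv0 : ∀ y c : Fin 2, v y c ⟨0, by omega⟩ = y := fun y c => by simp [hvdef]
  have hψv : ∀ y c : Fin 2, ψ (v y c) =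
      (1 / 2 : ℂ) * (if y = 0 then 1 else ep) * (if c = 0 then 1 else em) := by
    intro y c
    rw [hψ, hv0]
    congr 1
    by_cases hc : c = 0
    · subst hc
      rw [if_pos (fun j hj => by simp [hvdef, hj]), if_pos rfl]
    · have hc1 : c = 1 := by omega
      subst hc1
      rw [if_neg, if_pos (fun j hj => by simp [hvdef, hj]), if_neg (by decide)]
      intro h
      have := h ⟨1, by omega⟩ (by simp)
      simp [hvdef] at this
  have hψvc : ∀ y c : Fin 2, (starRingEnd ℂ) (ψ (v y c)) =
      (1 / 2 : ℂ) * (if y = 0 then 1 else em) * (if c = 0 then 1 else ep) := by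
    intro y c
    rw [hψv]
    by_cases hy : y = 0 <;> by_cases hc : c = 0 <;>
      simp [hy, hc, _root_.map_mul, hcep, hcem, map_div₀, _root_.map_one, map_ofNat]
  -- support of ψ
  have hsupp : ∀ g, ψ g ≠ 0 → ∃ q : Fin 2 × Fin 2, g = v q.1 q.2 := by
    intro g hg
    by_cases hc0 : ∀ j : Fin n, (j : ℕ) ≠ 0 → g j = 0
    · refine ⟨(g ⟨0, by omega⟩, 0), funext fun j => ?_⟩
      by_cases hj : (j : ℕ) = 0
      · have hje : j = (⟨0, by omega⟩ : Fin n) := Fin.ext (by simpa using hj)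
        rw [hje]; simp [hvdef]
      · rw [hc0 j hj]; simp [hvdef, hj]
    · by_cases hc1 : ∀ j : Fin n, (j : ℕ) ≠ 0 → g j = 1
      · refine ⟨(g ⟨0, by omega⟩, 1), funext fun j => ?_⟩
        by_cases hj : (j : ℕ) = 0
        · have hje : j = (⟨0, by omega⟩ : Fin n) := Fin.ext (by simpa using hj)
          rw [hje]; simp [hvdef]
        · rw [hc1 j hj]; simp [hvdef, hj]
      · exfalso
        apply hg
        rw [hψ, if_neg hc0, if_neg hc1, mul_zero]
  -- reduction of the expectation value to a 4×4 sum
  have hinj : ∀ p ∈ (Finset.univ : Finset (Fin 2 × Fin 2)), ∀ q ∈ Finset.univ,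
      v p.1 p.2 = v q.1 q.2 → p = q := by
    intro p _ q _ h
    have h0 := congrFun h ⟨0, by omega⟩
    have h1 := congrFun h ⟨1, by omega⟩
    simp [hvdef] at h0 h1
    exact Prod.ext h0 h1
  have himg : ∀ g : Fin n → Fin 2,
      g ∉ (Finset.univ : Finset (Fin 2 × Fin 2)).image (fun q => v q.1 q.2) → ψ g = 0 := by
    intro g hg
    by_contra h
    obtain ⟨q, hq⟩ := hsupp g h
    exact hg (Finset.mem_image.mpr ⟨q, Finset.mem_univ q, hq.symm⟩)
  have hexp : ∀ T : NMat n, expectVal ψ T =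
      ∑ p : Fin 2 × Fin 2, ∑ q : Fin 2 × Fin 2,
        (starRingEnd ℂ) (ψ (v p.1 p.2)) * (T (v p.1 p.2) (v q.1 q.2) * ψ (v q.1 q.2)) := by
    intro T
    have hin : ∀ f, (T *ᵥ ψ) f = ∑ q : Fin 2 × Fin 2, T f (v q.1 q.2) * ψ (v q.1 q.2) := by
      intro f
      rw [Matrix.mulVec, dotProduct]
      rw [← Finset.sum_subset (Finset.subset_univ _)
        (fun g _ hg => by rw [himg g hg, mul_zero])]
      rw [Finset.sum_image hinj]
    rw [expectVal, dotProduct]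
    rw [← Finset.sum_subset (Finset.subset_univ _) (fun g _ hg => by
        simp only [Pi.star_apply, Complex.star_def, himg g hg, map_zero, zero_mul])]
    rw [Finset.sum_image hinj]
    refine Finset.sum_congr rfl fun p _ => ?_
    rw [hin, Finset.mul_sum]
    refine Finset.sum_congr rfl fun q _ => ?_
    simp only [Pi.star_apply, Complex.star_def] <;> ring
  -- the two tensor factors
  obtain ⟨hp, hm⟩ := blockPair_formula A n le_rfl
  have hM : merminM A = (2 : ℂ)⁻¹ • (Pp A n + Pm A n) := by
    rw [merminM, hp, hm]
    module
  have hsplit : expectVal ψ (merminM A) =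
      (2 : ℂ)⁻¹ * (expectVal ψ (Pp A n) + expectVal ψ (Pm A n)) := by
    rw [hM, expectVal, Matrix.smul_mulVec, Matrix.add_mulVec, dotProduct_smul,
      dotProduct_add, smul_eq_mul, expectVal, expectVal]
  -- entrywise formulas
  have hPpn : Pp A n = tensorMat (fun j => A j 0 + Complex.I • A j 1) :=
    congrArg tensorMat (funext fun j => if_pos j.isLt)
  have hPmn : Pm A n = tensorMat (fun j => A j 0 - Complex.I • A j 1) :=
    congrArg tensorMat (funext fun j => if_pos j.isLt)
  have hB0p : A ⟨0, by omega⟩ 0 + Complex.I • A ⟨0, by omega⟩ 1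
      = !![0, 2 * (α:ℂ); 2 * Complex.I * (β:ℂ), 0] := by
    rw [hA00, hA01]; exact tiltP α β
  have hB0m : A ⟨0, by omega⟩ 0 - Complex.I • A ⟨0, by omega⟩ 1
      = !![0, -2 * Complex.I * (β:ℂ); 2 * (α:ℂ), 0] := by
    rw [hA00, hA01]; exact tiltM α β
  have hcard : (Finset.univ.erase (⟨0, by omega⟩ : Fin n)).card = n - 1 := by
    rw [Finset.card_erase_of_mem (Finset.mem_univ _), Finset.card_univ, Fintype.card_fin]
  have hEntry : ∀ (B : Fin n → QubitMat) (M0 M1 : QubitMat),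
      B ⟨0, by omega⟩ = M0 → (∀ j : Fin n, (j : ℕ) ≠ 0 → B j = M1) →
      ∀ y c x d : Fin 2,
      tensorMat B (v y c) (v x d) = M0 y x * (M1 c d) ^ (n - 1) := by
    intro B M0 M1 h0 h1 y c x d
    rw [tensorMat, ← Finset.mul_prod_erase _ _ (Finset.mem_univ (⟨0, by omega⟩ : Fin n))]
    have hprod : ∏ j ∈ Finset.univ.erase (⟨0, by omega⟩ : Fin n),
        B j (v y c j) (v x d j) = (M1 c d) ^ (n - 1) := by
      rw [Finset.prod_congr rfl (fun j hj => ?_), Finset.prod_const, hcard]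
      have hj0 : (j : ℕ) ≠ 0 := by
        intro hh
        exact (Finset.mem_erase.mp hj).1 (Fin.ext (by simpa using hh))
      rw [h1 j hj0]
      congr 1 <;> simp [hvdef, hj0]
    rw [hprod, hv0, hv0, h0]
  have hXp : ∀ j : Fin n, (j : ℕ) ≠ 0 →
      A j 0 + Complex.I • A j 1 = !![0, 2; 0, 0] := by
    intro j hj; rw [hAX j hj, hAY j hj]; exact pauliP
  have hXm : ∀ j : Fin n, (j : ℕ) ≠ 0 →
      A j 0 - Complex.I • A j 1 = !![0, 0; 2, 0] := by
    intro j hj; rw [hAX j hj, hAY j hj]; exact pauliM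
  have hEp : expectVal ψ (Pp A n) = (2:ℂ)^(n-1) * ((α:ℂ) + (β:ℂ)) / 2 := by
    rw [hexp, hPpn]
    have hE := hEntry (fun j => A j 0 + Complex.I • A j 1) _ _ hB0p hXp
    have hz : (0 : ℂ) ^ (n - 1) = 0 := zero_pow (by omega)
    simp only [hE, hψvc, hψv, Fintype.sum_prod_type, Fin.sum_univ_two,
      Matrix.cons_val', Matrix.cons_val_zero, Matrix.cons_val_one, Matrix.head_cons,
      Matrix.empty_val', Matrix.cons_val_fin_one, Matrix.head_fin_const, hz]
    norm_num [hz]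
    simp only [map_ofNat (starRingEnd ℂ) 2, hcep, hcem]
    linear_combination ((2:ℂ)^(n-1) * (α:ℂ) / 2) * hpm
      + ((2:ℂ)^(n-1) * Complex.I * (β:ℂ) / 2) * hmm
      + (-(2:ℂ)^(n-1) * (β:ℂ) / 2) * Complex.I_mul_I
  have hEm : expectVal ψ (Pm A n) = (2:ℂ)^(n-1) * ((α:ℂ) + (β:ℂ)) / 2 := by
    rw [hexp, hPmn]
    have hE := hEntry (fun j => A j 0 - Complex.I • A j 1) _ _ hB0m hXm
    have hz : (0 : ℂ) ^ (n - 1) = 0 := zero_pow (by omega)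
    simp only [hE, hψvc, hψv, Fintype.sum_prod_type, Fin.sum_univ_two,
      Matrix.cons_val', Matrix.cons_val_zero, Matrix.cons_val_one, Matrix.head_cons,
      Matrix.empty_val', Matrix.cons_val_fin_one, Matrix.head_fin_const, hz]
    norm_num [hz]
    simp only [map_ofNat (starRingEnd ℂ) 2, hcep, hcem]
    linear_combination ((2:ℂ)^(n-1) * (α:ℂ) / 2) * hpm
      - ((2:ℂ)^(n-1) * Complex.I * (β:ℂ) / 2) * hpp
      + (-(2:ℂ)^(n-1) * (β:ℂ) / 2) * Complex.I_mul_I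
  rw [hsplit, hEp, hEm]
  have h21 : (2:ℂ)^(n-1) = 2 * (2:ℂ)^(n-2) := by
    rw [show n - 1 = (n - 2) + 1 by omega, pow_succ]
    ring
  push_cast
  rw [h21]
  ring
end
end

section
/- For all integers k ≥ 2 and 1 ≤ l ≤ k−1, the recursively defined Mermin operators satisfy the splitting identity M_k = M_{k−l} M_l − N_{k−l} N_l, where M_{k−l}, N_{k−l} are the operators built from the observables of parties 1,…,k−l (padded with the identity on parties k−l+1,…,k) and M_l, N_l are the operators built from the observables of parties k−l+1,…,k (padded with the identity on parties 1,…,k−l). -/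
open Matrix Complex
open scoped ComplexOrder

noncomputable section

lemma blockPair_split_aux (n a : ℕ) (A : Fin n → Fin 2 → QubitMat) :
    ∀ b, a + b ≤ n →
      (blockPair A 0 (a + b)).1 =
        (blockPair A 0 a).1 * (blockPair A a b).1 -
          (blockPair A 0 a).2 * (blockPair A a b).2 ∧
      (blockPair A 0 (a + b)).2 =
        (blockPair A 0 a).1 * (blockPair A a b).2 +
          (blockPair A 0 a).2 * (blockPair A a b).1 := by
  intro b
  induction b with
  | zero => intro _; simp [blockPair]
  | succ b ih =>
    intro h
    obtain ⟨h1, h2⟩ := ih (by omega)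
    have hlt : a + b < n := by omega
    have hlt0 : 0 + (a + b) < n := by omega
    rw [show a + (b + 1) = (a + b) + 1 from rfl]
    simp only [blockPair, dif_pos hlt0, dif_pos hlt, Nat.zero_add]
    constructor <;> (rw [h1, h2]; noncomm_ring)

/-- the splitting identity M_k = M_{k−l}·M_l − N_{k−l}·N_l,
    where the first factors are built from the observables of parties
    1,…,k−l and the second from those of parties k−l+1,…,k (all padded to
    the full k-qubit space). -/
theorem mermin_splitting
    (k : ℕ) (hk : 2 ≤ k) (l : ℕ) (hl1 : 1 ≤ l) (hl2 : l ≤ k - 1)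
    (A : Fin k → Fin 2 → QubitMat)
    (hA : ∀ (j : Fin k) (i : Fin 2), (A j i).IsHermitian) :
    (blockPair A 0 k).1 =
      (blockPair A 0 (k - l)).1 * (blockPair A (k - l) l).1
        - (blockPair A 0 (k - l)).2 * (blockPair A (k - l) l).2 := by
  have hkl : k - l + l = k := by omega
  have := (blockPair_split_aux k (k - l) A l (by omega)).1
  rwa [hkl] at this
end
end

section
/- For every integer n ≥ 4, every bipartition S | Sᶜ of the parties {1,…,n} with |S| ≥ 2 and |Sᶜ| ≥ 2, every n-qubit pure state |ψ⟩ that is a tensor product |φ_S⟩ ⊗ |χ_{Sᶜ}⟩ across this bipartition, and every choice of arbitrary dichotomic qubit observables A₀⁽ʲ⁾, A₁⁽ʲ⁾ for each party, the Mermin expectation value satisfies ⟨ψ|M_n|ψ⟩ ≤ 2^{n−2}. (Thus the Mermin witness is completely robust against misalignment of the measurement directions for biseparable states whose bipartition puts at least two qubits on each side.) -/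
open Matrix Complex
open scoped ComplexOrder

noncomputable section

/-!
With `B_j = A₀⁽ʲ⁾ + i A₁⁽ʲ⁾`, the Mermin recursion gives `M_n + i N_n = B_1 ⊗ ⋯ ⊗ B_n`, and for
Hermitian observables `M_n − i N_n` is its adjoint, so `Re ⟨ψ|M_n|ψ⟩ = Re ⟨ψ|⊗ B_j|ψ⟩`; on a product
state this expectation factorises over `S` and `Sᶜ`. Since `A² = 1`, each `B = B_j` satisfies
`B†B + BB† = 4`, i.e. `‖B v‖² + ‖B† v‖² = 4‖v‖²`, whence `‖B‖ ≤ 2` and `‖B v‖‖B† v‖ ≤ 2‖v‖²`.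
On a block of `m ≥ 2` qubits, split off two sites `a ≠ b`: `⊗ B_j = B_a R B_b = B_b R B_a` with
`‖R‖ ≤ 2^(m−2)`. Multiplying the Cauchy–Schwarz bounds
`|⟨v|B_a R B_b|v⟩| ≤ ‖B_a† v‖ 2^(m−2) ‖B_b v‖` and its mirror image pairs each `‖B v‖` with its
`‖B† v‖`, giving `|⟨v|⊗ B_j|v⟩| ≤ 2^(m−1)‖v‖²`.
The two blocks contribute `2^(|S|−1) · 2^(|Sᶜ|−1) = 2^(n−2)`.
-/

namespace Matrix

section PiKron

variable {ι κ R : Type*} [Fintype ι] [CommSemiring R]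

def piKron (B : ι → Matrix κ κ R) : Matrix (ι → κ) (ι → κ) R :=
  of fun f g => ∏ i, B i (f i) (g i)

@[simp]
lemma piKron_apply (B : ι → Matrix κ κ R) (f g : ι → κ) :
    piKron B f g = ∏ i, B i (f i) (g i) := rfl

lemma piKron_mul [DecidableEq ι] [Fintype κ] (B C : ι → Matrix κ κ R) :
    piKron B * piKron C = piKron (B * C) := by
  ext f g
  simp only [mul_apply, piKron_apply, Pi.mul_apply, Fintype.prod_sum, ← Finset.prod_mul_distrib]

lemma piKron_one [DecidableEq κ] : piKron (1 : ι → Matrix κ κ R) = 1 := by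
  ext f g
  simp only [piKron_apply, Pi.one_apply, one_apply, Fintype.prod_boole, funext_iff]

lemma piKron_conjTranspose [StarRing R] (B : ι → Matrix κ κ R) :
    (piKron B)ᴴ = piKron fun i => (B i)ᴴ := by
  ext f g
  simp [star_prod]

lemma piKron_apply_eq_mul [DecidableEq ι] (S : Finset ι) (B : ι → Matrix κ κ R) (f g : ι → κ) :
    piKron B f g =
      piKron (fun i : {i // i ∈ S} => B i) (fun i => f i) (fun i => g i) *
        piKron (fun i : {i // i ∉ S} => B i) (fun i => f i) (fun i => g i) := by
  simp only [piKron_apply]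
  convert (Fintype.prod_subtype_mul_prod_subtype (· ∈ S) fun i => B i (f i) (g i)).symm

variable [DecidableEq ι]

lemma piKron_update_apply (B : ι → Matrix κ κ R) (j : ι) (X : Matrix κ κ R) (f g : ι → κ) :
    piKron (Function.update B j X) f g =
      X (f j) (g j) * ∏ i ∈ Finset.univ.erase j, B i (f i) (g i) := by
  rw [piKron_apply, ← Finset.mul_prod_erase _ _ (Finset.mem_univ j), Function.update_self]
  congr 1
  exact Finset.prod_congr rfl fun i hi => by rw [Function.update_of_ne (Finset.ne_of_mem_erase hi)]

lemma piKron_update_add (B : ι → Matrix κ κ R) (j : ι) (X Y : Matrix κ κ R) :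
    piKron (Function.update B j (X + Y)) =
      piKron (Function.update B j X) + piKron (Function.update B j Y) := by
  ext f g
  simp only [add_apply, piKron_update_apply, add_mul]

lemma piKron_update_smul (B : ι → Matrix κ κ R) (j : ι) (c : R) (X : Matrix κ κ R) :
    piKron (Function.update B j (c • X)) = c • piKron (Function.update B j X) := by
  ext f g
  simp only [smul_apply, piKron_update_apply, smul_eq_mul, mul_assoc]

lemma piKron_mulSingle_conjTranspose [StarRing R] [DecidableEq κ] (j : ι) (X : Matrix κ κ R) :
    (piKron (Pi.mulSingle j X))ᴴ = piKron (Pi.mulSingle j Xᴴ) := by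
  rw [piKron_conjTranspose]
  congr 1
  funext i
  exact Pi.apply_mulSingle (fun _ Y => Yᴴ) (fun _ => conjTranspose_one) j X i

lemma piKron_mulSingle_conjTranspose_mul_add [StarRing R] [Fintype κ] [DecidableEq κ] {j : ι}
    {X : Matrix κ κ R} {c : R} (hX : Xᴴ * X + X * Xᴴ = c • 1) :
    (piKron (Pi.mulSingle j X))ᴴ * piKron (Pi.mulSingle j X) +
      piKron (Pi.mulSingle j X) * (piKron (Pi.mulSingle j X))ᴴ = c • 1 := by
  rw [piKron_mulSingle_conjTranspose, piKron_mul, piKron_mul, ← Pi.mulSingle_mul,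
    ← Pi.mulSingle_mul, Pi.mulSingle, Pi.mulSingle, ← piKron_update_add, hX,
    piKron_update_smul, Function.update_one, piKron_one]

end PiKron

end Matrix

lemma Pi.mulSingle_mul_ite_mul_mulSingle {ι M : Type*} [Fintype ι] [DecidableEq ι] [Monoid M]
    (B : ι → M) {a b : ι} (hab : a ≠ b) :
    Pi.mulSingle a (B a) * (fun i => if i ∈ ({a, b} : Finset ι)ᶜ then B i else 1) *
      Pi.mulSingle b (B b) = B := by
  funext i
  by_cases ha : i = a
  · subst ha; simp [hab]
  · by_cases hb : i = b
    · subst hb; simp [ha]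
    · simp [ha, hb]

lemma Finset.sum_restrict_mul_restrict_compl {ι κ R : Type*} [Fintype ι] [DecidableEq ι]
    [Fintype κ] [CommSemiring R] (S : Finset ι) (F : ({i // i ∈ S} → κ) → R)
    (G : ({i // i ∉ S} → κ) → R) :
    ∑ f : ι → κ, F (fun i => f i) * G (fun i => f i) = (∑ x, F x) * ∑ y, G y := by
  rw [Finset.sum_mul_sum, ← Fintype.sum_prod_type',
    ← (Equiv.piEquivPiSubtypeProd (· ∈ S) fun _ => κ).sum_comp]
  rfl

namespace ContinuousLinearMap

variable {E : Type*} [NormedAddCommGroup E] [InnerProductSpace ℂ E] [CompleteSpace E]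
  {P Q R : E →L[ℂ] E}

lemma norm_sq_add_norm_star_sq (hP : star P * P + P * star P = (4 : ℂ) • 1) (x : E) :
    ‖P x‖ ^ 2 + ‖star P x‖ ^ 2 = 4 * ‖x‖ ^ 2 := by
  rw [star_eq_adjoint] at hP ⊢
  calc ‖P x‖ ^ 2 + ‖adjoint P x‖ ^ 2
      = RCLike.re (inner ℂ x ((adjoint P * P + P * adjoint P) x)) := by
        rw [apply_norm_sq_eq_inner_adjoint_right, apply_norm_sq_eq_inner_adjoint_right,
          adjoint_adjoint, _root_.add_apply, inner_add_right, map_add]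
        rfl
    _ = 4 * ‖x‖ ^ 2 := by
        rw [hP, _root_.smul_apply, one_apply_eq_self, inner_smul_right,
          inner_self_eq_norm_sq_to_K]
        simp [← Complex.ofReal_pow]

lemma norm_le_two (hP : star P * P + P * star P = (4 : ℂ) • 1) : ‖P‖ ≤ 2 :=
  opNorm_le_bound P zero_le_two fun x => by
    nlinarith [norm_sq_add_norm_star_sq hP x, norm_nonneg (P x), norm_nonneg x]

lemma norm_apply_mul_norm_star_apply_le (hP : star P * P + P * star P = (4 : ℂ) • 1) (x : E) :
    ‖P x‖ * ‖star P x‖ ≤ 2 * ‖x‖ ^ 2 := by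
  nlinarith [norm_sq_add_norm_star_sq hP x, sq_nonneg (‖P x‖ - ‖star P x‖)]

lemma norm_inner_mul_mul_le (hP : star P * P + P * star P = (4 : ℂ) • 1)
    (hQ : star Q * Q + Q * star Q = (4 : ℂ) • 1) (hcomm : P * R * Q = Q * R * P) (x : E) :
    ‖inner ℂ x ((P * R * Q) x)‖ ≤ 2 * ‖R‖ * ‖x‖ ^ 2 := by
  have cauchy_schwarz : ∀ {P Q : E →L[ℂ] E},
      ‖inner ℂ x ((P * R * Q) x)‖ ≤ ‖star P x‖ * (‖R‖ * ‖Q x‖) := fun {P Q} => by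
    rw [mul_apply_eq_comp, mul_apply_eq_comp, star_eq_adjoint, ← adjoint_inner_left]
    exact (norm_inner_le_norm _ _).trans
      (mul_le_mul_of_nonneg_left (le_opNorm R _) (norm_nonneg _))
  have h₁ := cauchy_schwarz (P := P) (Q := Q)
  have h₂ := cauchy_schwarz (P := Q) (Q := P)
  rw [← hcomm] at h₂
  have hsq : ‖inner ℂ x ((P * R * Q) x)‖ ^ 2 ≤ (2 * ‖R‖ * ‖x‖ ^ 2) ^ 2 := by
    calc _ ≤ (‖star P x‖ * (‖R‖ * ‖Q x‖)) * (‖star Q x‖ * (‖R‖ * ‖P x‖)) := by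
          rw [sq]; exact mul_le_mul h₁ h₂ (norm_nonneg _) (by positivity)
      _ = ‖R‖ ^ 2 * ((‖P x‖ * ‖star P x‖) * (‖Q x‖ * ‖star Q x‖)) := by ring
      _ ≤ ‖R‖ ^ 2 * ((2 * ‖x‖ ^ 2) * (2 * ‖x‖ ^ 2)) := by
          gcongr ‖R‖ ^ 2 * ?_
          exact mul_le_mul (norm_apply_mul_norm_star_apply_le hP x)
            (norm_apply_mul_norm_star_apply_le hQ x) (by positivity) (by positivity)
      _ = (2 * ‖R‖ * ‖x‖ ^ 2) ^ 2 := by ring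
  exact le_of_pow_le_pow_left₀ two_ne_zero (by positivity) hsq

end ContinuousLinearMap

lemma norm_toLp_sq_eq_sum_normSq {κ : Type*} [Fintype κ] (v : κ → ℂ) :
    ‖WithLp.toLp 2 v‖ ^ 2 = ∑ i, Complex.normSq (v i) := by
  simp [EuclideanSpace.norm_sq_eq, Complex.normSq_eq_norm_sq]

section PiKronBound

open ContinuousLinearMap

variable {ι κ : Type*} [Fintype ι] [DecidableEq ι] [Fintype κ] [DecidableEq κ]
  {B : ι → Matrix κ κ ℂ}

lemma star_dotProduct_mulVec_eq_inner (M : Matrix κ κ ℂ) (v : κ → ℂ) :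
    star v ⬝ᵥ (M *ᵥ v) =
      inner ℂ (WithLp.toLp 2 v) (toEuclideanCLM (𝕜 := ℂ) M (WithLp.toLp 2 v)) := by
  rw [toEuclideanCLM_toLp, EuclideanSpace.inner_toLp_toLp, dotProduct_comm]

lemma star_toEuclideanCLM_piKron_mulSingle_mul_add {j : ι} {X : Matrix κ κ ℂ}
    (hX : Xᴴ * X + X * Xᴴ = (4 : ℂ) • 1) :
    let P := toEuclideanCLM (𝕜 := ℂ) (n := ι → κ) (piKron (Pi.mulSingle j X))
    star P * P + P * star P = (4 : ℂ) • 1 := by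
  have h := congrArg (toEuclideanCLM (𝕜 := ℂ) (n := ι → κ))
    (piKron_mulSingle_conjTranspose_mul_add (j := j) hX)
  rw [map_add, map_mul, map_mul, ← star_eq_conjTranspose, map_star, map_smul, map_one] at h
  exact h

lemma norm_toEuclideanCLM_piKron_ite_le (hB : ∀ j, (B j)ᴴ * B j + B j * (B j)ᴴ = (4 : ℂ) • 1)
    (T : Finset ι) :
    ‖toEuclideanCLM (𝕜 := ℂ) (n := ι → κ) (piKron fun i => if i ∈ T then B i else 1)‖ ≤
      2 ^ T.card := by
  induction T using Finset.induction_on with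
  | empty =>
    simp only [Finset.notMem_empty, if_false, Finset.card_empty, pow_zero]
    rw [← Pi.one_def, piKron_one, map_one]
    exact norm_id_le
  | @insert j T hj ih =>
    have hfamily : (fun i => if i ∈ insert j T then B i else 1) =
        Pi.mulSingle j (B j) * fun i => if i ∈ T then B i else 1 := by
      funext i
      by_cases hij : i = j
      · subst hij; simp [hj]
      · simp [hij]
    rw [hfamily, ← piKron_mul, map_mul, Finset.card_insert_of_notMem hj, pow_succ']
    exact (norm_mul_le _ _).trans <| mul_le_mul
      (norm_le_two (star_toEuclideanCLM_piKron_mulSingle_mul_add (hB j))) ih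
      (norm_nonneg _) zero_le_two

lemma norm_star_dotProduct_piKron_mulVec_le
    (hB : ∀ j, (B j)ᴴ * B j + B j * (B j)ᴴ = (4 : ℂ) • 1) (hcard : 2 ≤ Fintype.card ι)
    (v : (ι → κ) → ℂ) :
    ‖star v ⬝ᵥ (piKron B *ᵥ v)‖ ≤ 2 ^ (Fintype.card ι - 1) * ∑ f, Complex.normSq (v f) := by
  obtain ⟨a, b, hab⟩ := Fintype.exists_pair_of_one_lt_card (α := ι) (by omega)
  set T : Finset ι := {a, b}ᶜ with hT
  set E := toEuclideanCLM (𝕜 := ℂ) (n := ι → κ)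
  set P := E (piKron (Pi.mulSingle a (B a)))
  set Q := E (piKron (Pi.mulSingle b (B b)))
  set R := E (piKron fun i => if i ∈ T then B i else 1)
  have hK : E (piKron B) = P * R * Q := by
    rw [← map_mul, ← map_mul, piKron_mul, piKron_mul, Pi.mulSingle_mul_ite_mul_mulSingle B hab]
  have hcomm : P * R * Q = Q * R * P := by
    rw [← hK, ← map_mul, ← map_mul, piKron_mul, piKron_mul, hT, Finset.pair_comm,
      Pi.mulSingle_mul_ite_mul_mulSingle B hab.symm]
  have hR : ‖R‖ ≤ 2 ^ (Fintype.card ι - 2) := by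
    rw [← Finset.card_pair hab, ← Finset.card_compl]
    exact norm_toEuclideanCLM_piKron_ite_le hB T
  have hpow : (2 : ℝ) ^ (Fintype.card ι - 1) = 2 * 2 ^ (Fintype.card ι - 2) := by
    rw [← pow_succ']; congr 1; omega
  rw [star_dotProduct_mulVec_eq_inner, ← norm_toLp_sq_eq_sum_normSq, hK, hpow]
  refine (norm_inner_mul_mul_le (star_toEuclideanCLM_piKron_mulSingle_mul_add (hB a))
    (star_toEuclideanCLM_piKron_mulSingle_mul_add (hB b)) hcomm _).trans ?_
  gcongr

end PiKronBound

section ProductVectors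

variable {ι κ : Type*} [Fintype ι] [DecidableEq ι] [Fintype κ] (S : Finset ι)
  {B : ι → Matrix κ κ ℂ} {ψ : (ι → κ) → ℂ} {φ : ({i // i ∈ S} → κ) → ℂ}
  {χ : ({i // i ∉ S} → κ) → ℂ}

lemma piKron_mulVec_of_prod (hψ : ∀ f, ψ f = φ (fun i => f i) * χ (fun i => f i))
    (f : ι → κ) :
    (piKron B *ᵥ ψ) f = (piKron (fun i : {i // i ∈ S} => B i) *ᵥ φ) (fun i => f i) *
      (piKron (fun i : {i // i ∉ S} => B i) *ᵥ χ) (fun i => f i) := by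
  simp only [mulVec, dotProduct, piKron_apply_eq_mul S, hψ]
  rw [← Finset.sum_restrict_mul_restrict_compl S]
  exact Finset.sum_congr rfl fun g _ => by ring

lemma star_dotProduct_piKron_mulVec_of_prod
    (hψ : ∀ f, ψ f = φ (fun i => f i) * χ (fun i => f i)) :
    star ψ ⬝ᵥ (piKron B *ᵥ ψ) =
      (star φ ⬝ᵥ (piKron (fun i : {i // i ∈ S} => B i) *ᵥ φ)) *
        (star χ ⬝ᵥ (piKron (fun i : {i // i ∉ S} => B i) *ᵥ χ)) := by
  simp only [dotProduct, Pi.star_apply, piKron_mulVec_of_prod S hψ, hψ, star_mul']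
  rw [← Finset.sum_restrict_mul_restrict_compl S]
  exact Finset.sum_congr rfl fun f _ => by ring

lemma sum_normSq_of_prod (hψ : ∀ f, ψ f = φ (fun i => f i) * χ (fun i => f i)) :
    ∑ f, Complex.normSq (ψ f) = (∑ x, Complex.normSq (φ x)) * ∑ y, Complex.normSq (χ y) := by
  simp only [hψ, Complex.normSq_mul]
  exact Finset.sum_restrict_mul_restrict_compl S (fun x => Complex.normSq (φ x))
    fun y => Complex.normSq (χ y)

end ProductVectors

lemma IsDichotomic.conjTranspose_mul_add {X Y : QubitMat} (hX : IsDichotomic X)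
    (hY : IsDichotomic Y) :
    (X + I • Y)ᴴ * (X + I • Y) + (X + I • Y) * (X + I • Y)ᴴ = (4 : ℂ) • 1 := by
  have hstar : (X + I • Y)ᴴ = X + (-I) • Y := by
    simp [hX.1.eq, hY.1.eq]
  rw [hstar]
  simp only [Matrix.mul_add, Matrix.add_mul, Matrix.smul_mul, Matrix.mul_smul, smul_add,
    smul_smul, hX.2, hY.2, neg_mul, mul_neg, I_mul_I, neg_neg]
  module

lemma pad_eq_piKron (n : ℕ) (j : Fin n) (X : QubitMat) :
    pad n j X = piKron (Pi.mulSingle j X) := by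
  ext f g
  rw [Pi.mulSingle, piKron_update_apply]
  simp [pad, one_apply]

section Mermin

variable {n : ℕ}

lemma expectVal_conjTranspose (ψ : (Fin n → Fin 2) → ℂ) (M : NMat n) :
    expectVal ψ Mᴴ = star (expectVal ψ M) := by
  rw [expectVal, expectVal, star_dotProduct, star_mulVec, conjTranspose_conjTranspose,
    ← dotProduct_mulVec]

variable (A : Fin n → Fin 2 → QubitMat)

lemma blockPair_add_smul {c : ℂ} (hc : c * c = -1) (k : ℕ) :
    (blockPair A 0 k).1 + c • (blockPair A 0 k).2 =
      piKron fun j : Fin n => if (j : ℕ) < k then A j 0 + c • A j 1 else 1 := by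
  induction k with
  | zero => simp [blockPair, ← Pi.one_def, piKron_one]
  | succ k ih =>
    by_cases hk : 0 + k < n
    · set j : Fin n := ⟨0 + k, hk⟩
      have hpad : pad n j (A j 0) + c • pad n j (A j 1) =
          piKron (Pi.mulSingle j (A j 0 + c • A j 1)) := by
        simp only [pad_eq_piKron, Pi.mulSingle, piKron_update_add, piKron_update_smul]
      have hfamily : ((fun i : Fin n => if (i : ℕ) < k then A i 0 + c • A i 1 else 1) *
          Pi.mulSingle j (A j 0 + c • A j 1)) =
          fun i : Fin n => if (i : ℕ) < k + 1 then A i 0 + c • A i 1 else 1 := by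
        funext i
        by_cases hij : i = j
        · subst hij; simp [j]
        · have : (i : ℕ) ≤ k ↔ (i : ℕ) < k := by
            have : (i : ℕ) ≠ k := fun h => hij (Fin.ext (by simp [j, h]))
            omega
          simp [hij, this]
      simp only [blockPair, dif_pos hk]
      calc _ = ((blockPair A 0 k).1 + c • (blockPair A 0 k).2) *
            (pad n j (A j 0) + c • pad n j (A j 1)) := by
            simp only [Matrix.mul_add, Matrix.add_mul, Matrix.smul_mul, Matrix.mul_smul,
              smul_add, smul_smul, hc]
            module
        _ = _ := by rw [ih, hpad, piKron_mul, hfamily]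
    · have hfamily : (fun i : Fin n => if (i : ℕ) < k + 1 then A i 0 + c • A i 1 else 1) =
          fun i : Fin n => if (i : ℕ) < k then A i 0 + c • A i 1 else 1 := by
        funext i
        have : (i : ℕ) < k := by omega
        simp [this, Nat.lt_succ_of_lt this]
      simp only [blockPair, dif_neg hk]
      rw [ih, hfamily]

lemma merminM_add_smul_merminN {c : ℂ} (hc : c * c = -1) :
    merminM A + c • merminN A = piKron fun j => A j 0 + c • A j 1 := by
  simp [merminM, merminN, blockPair_add_smul A hc]

lemma re_expectVal_merminM (hA : ∀ j i, (A j i).IsHermitian) (ψ : (Fin n → Fin 2) → ℂ) :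
    (expectVal ψ (merminM A)).re = (expectVal ψ (piKron fun j => A j 0 + I • A j 1)).re := by
  set K := piKron fun j => A j 0 + I • A j 1
  have hK : merminM A + I • merminN A = K := merminM_add_smul_merminN A I_mul_I
  have hKstar : merminM A + (-I) • merminN A = Kᴴ := by
    rw [merminM_add_smul_merminN A (by simp), piKron_conjTranspose]
    congr 1
    funext j
    simp [(hA j 0).eq, (hA j 1).eq]
  have h2M : (2 : ℂ) • merminM A = K + Kᴴ := by
    rw [← hKstar, ← hK]; module
  have hexpect : 2 * expectVal ψ (merminM A) = expectVal ψ K + star (expectVal ψ K) := by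
    calc 2 * expectVal ψ (merminM A) = expectVal ψ ((2 : ℂ) • merminM A) := by
          simp only [expectVal, smul_mulVec, dotProduct_smul, smul_eq_mul]
      _ = expectVal ψ K + expectVal ψ Kᴴ := by
          rw [h2M]; simp only [expectVal, add_mulVec, dotProduct_add]
      _ = _ := by rw [expectVal_conjTranspose]
  have h := congrArg Complex.re hexpect
  simp only [mul_re, re_ofNat, im_ofNat, add_re, star_def, conj_re] at h
  linarith

end Mermin

theorem mermin_robust_bisep_bound_general
    (n : ℕ)
    (S : Finset (Fin n)) (hS : 2 ≤ S.card) (hSc : 2 ≤ Sᶜ.card)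
    (ψ : (Fin n → Fin 2) → ℂ) (hunit : IsUnitVec ψ)
    (φ : ({i : Fin n // i ∈ S} → Fin 2) → ℂ)
    (χ : ({i : Fin n // i ∉ S} → Fin 2) → ℂ)
    (hprod : ∀ f, ψ f = φ (fun i => f i.1) * χ (fun i => f i.1))
    (A : Fin n → Fin 2 → QubitMat)
    (hA : ∀ (j : Fin n) (i : Fin 2), IsDichotomic (A j i)) :
    (expectVal ψ (merminM A)).re ≤ (2 : ℝ) ^ (n - 2) := by
  have hB (j : Fin n) := (hA j 0).conjTranspose_mul_add (hA j 1)
  have hcardS : Fintype.card {i // i ∈ S} = S.card := Fintype.card_coe S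
  have hcardSc : Fintype.card {i // i ∉ S} = Sᶜ.card := by
    rw [Fintype.card_subtype_compl, hcardS, Finset.card_compl]
  have hφ := norm_star_dotProduct_piKron_mulVec_le (fun j : {i // i ∈ S} => hB j)
    (hcardS ▸ hS) φ
  have hχ := norm_star_dotProduct_piKron_mulVec_le (fun j : {i // i ∉ S} => hB j)
    (hcardSc ▸ hSc) χ
  rw [hcardS] at hφ
  rw [hcardSc] at hχ
  have hexp : S.card - 1 + (Sᶜ.card - 1) = n - 2 := by
    have := Finset.card_add_card_compl S
    rw [Fintype.card_fin] at this
    omega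
  rw [re_expectVal_merminM A (fun j i => (hA j i).1), expectVal,
    star_dotProduct_piKron_mulVec_of_prod S hprod]
  calc _ ≤ ‖_‖ := re_le_norm _
    _ ≤ (2 ^ (S.card - 1) * ∑ x, normSq (φ x)) * (2 ^ (Sᶜ.card - 1) * ∑ y, normSq (χ y)) := by
        rw [norm_mul]
        exact mul_le_mul hφ hχ (norm_nonneg _)
          (mul_nonneg (by positivity) (Finset.sum_nonneg fun _ _ => normSq_nonneg _))
    _ = 2 ^ (n - 2) := by
        rw [mul_mul_mul_comm, ← pow_add, hexp, ← sum_normSq_of_prod S hprod, hunit, mul_one]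

/-- for a pure product state across a bipartition with at least
    two qubits on each side, the Mermin expectation value never exceeds
    2^{n−2}, for arbitrary dichotomic local observables. -/
theorem mermin_robust_bisep_bound
    (n : ℕ) (hn : 4 ≤ n)
    (S : Finset (Fin n)) (hS : 2 ≤ S.card) (hSc : 2 ≤ Sᶜ.card)
    (ψ : (Fin n → Fin 2) → ℂ) (hunit : IsUnitVec ψ)
    (φ : ({i : Fin n // i ∈ S} → Fin 2) → ℂ)
    (χ : ({i : Fin n // i ∉ S} → Fin 2) → ℂ)
    (hprod : ∀ f, ψ f = φ (fun i => f i.1) * χ (fun i => f i.1))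
    (A : Fin n → Fin 2 → QubitMat)
    (hA : ∀ (j : Fin n) (i : Fin 2), IsDichotomic (A j i)) :
    (expectVal ψ (merminM A)).re ≤ (2 : ℝ) ^ (n - 2) :=
  mermin_robust_bisep_bound_general n S hS hSc ψ hunit φ χ hprod A hA
end
end

section
/- Let 0 ≤ ε ≤ (2−√2)/4, let q be a real number with 1−2ε ≤ q ≤ 1, and let x, y be real numbers with x² + y² ≤ 1. Then x² + y² + 4q√(1−q²)·xy ≤ (q + √(1−q²))², and moreover q + √(1−q²) ≤ 1 − 2ε + 2√(ε(1−ε)). -/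
lemma sqrt_aux_mono (a q : ℝ) (ha : Real.sqrt 2 / 2 ≤ a) (haq : a ≤ q) (hq1 : q ≤ 1) :
    q + Real.sqrt (1 - q ^ 2) ≤ a + Real.sqrt (1 - a ^ 2) := by
  have h2 : (Real.sqrt 2) ^ 2 = 2 := Real.sq_sqrt (by norm_num)
  have h2pos : 0 < Real.sqrt 2 := Real.sqrt_pos.mpr (by norm_num)
  have hapos : 0 < a := by nlinarith
  have ha2 : 1 / 2 ≤ a ^ 2 := by nlinarith
  have h1q : 0 ≤ 1 - q ^ 2 := by nlinarith
  have h1a : 0 ≤ 1 - a ^ 2 := by nlinarith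
  have hs0 : 0 ≤ Real.sqrt (1 - q ^ 2) := Real.sqrt_nonneg _
  have ht0 : 0 ≤ Real.sqrt (1 - a ^ 2) := Real.sqrt_nonneg _
  have hs2 : (Real.sqrt (1 - q ^ 2)) ^ 2 = 1 - q ^ 2 := Real.sq_sqrt h1q
  have ht2 : (Real.sqrt (1 - a ^ 2)) ^ 2 = 1 - a ^ 2 := Real.sq_sqrt h1a
  have hq2 : a ^ 2 ≤ q ^ 2 := by nlinarith
  have hsum2 : (0:ℝ) ≤ q ^ 2 + a ^ 2 - 1 := by nlinarith
  have hkey : q * Real.sqrt (1 - q ^ 2) ≤ a * Real.sqrt (1 - a ^ 2) := by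
    have hsq : (q * Real.sqrt (1 - q ^ 2)) ^ 2 ≤ (a * Real.sqrt (1 - a ^ 2)) ^ 2 := by
      rw [mul_pow, mul_pow, hs2, ht2]
      nlinarith [mul_nonneg (sub_nonneg.mpr hq2) hsum2]
    have h1 : q * Real.sqrt (1 - q ^ 2) = Real.sqrt ((q * Real.sqrt (1 - q ^ 2)) ^ 2) :=
      (Real.sqrt_sq (mul_nonneg (by linarith) hs0)).symm
    have h2' : a * Real.sqrt (1 - a ^ 2) = Real.sqrt ((a * Real.sqrt (1 - a ^ 2)) ^ 2) :=
      (Real.sqrt_sq (by positivity)).symm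
    rw [h1, h2']
    exact Real.sqrt_le_sqrt hsq
  have hsum : (q + Real.sqrt (1 - q ^ 2)) ^ 2 ≤ (a + Real.sqrt (1 - a ^ 2)) ^ 2 := by
    nlinarith
  have h1 : q + Real.sqrt (1 - q ^ 2) = Real.sqrt ((q + Real.sqrt (1 - q ^ 2)) ^ 2) :=
    (Real.sqrt_sq (add_nonneg (by linarith) hs0)).symm
  have h2' : a + Real.sqrt (1 - a ^ 2) = Real.sqrt ((a + Real.sqrt (1 - a ^ 2)) ^ 2) :=
    (Real.sqrt_sq (by positivity)).symm
  rw [h1, h2']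
  exact Real.sqrt_le_sqrt hsum

/-- the single-qubit scalar estimate used in the proof of the
    imprecision-corrected biseparable bound of the Mermin witness. -/
theorem single_qubit_scalar_estimate
    (ε q x y : ℝ) (hε0 : 0 ≤ ε) (hε1 : ε ≤ (2 - Real.sqrt 2) / 4)
    (hq0 : 1 - 2 * ε ≤ q) (hq1 : q ≤ 1) (hxy : x ^ 2 + y ^ 2 ≤ 1) :
    x ^ 2 + y ^ 2 + 4 * q * Real.sqrt (1 - q ^ 2) * x * y
        ≤ (q + Real.sqrt (1 - q ^ 2)) ^ 2
      ∧ q + Real.sqrt (1 - q ^ 2) ≤ 1 - 2 * ε + 2 * Real.sqrt (ε * (1 - ε)) := by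
  have h2 : (Real.sqrt 2) ^ 2 = 2 := Real.sq_sqrt (by norm_num)
  have h2pos : 0 < Real.sqrt 2 := Real.sqrt_pos.mpr (by norm_num)
  have ha : Real.sqrt 2 / 2 ≤ 1 - 2 * ε := by nlinarith
  have hq0' : 0 < q := by nlinarith
  have h1q : 0 ≤ 1 - q ^ 2 := by nlinarith
  have hs0 : 0 ≤ Real.sqrt (1 - q ^ 2) := Real.sqrt_nonneg _
  have hs2 : (Real.sqrt (1 - q ^ 2)) ^ 2 = 1 - q ^ 2 := Real.sq_sqrt h1q
  constructor
  · nlinarith [mul_nonneg (mul_nonneg hq0'.le hs0) (sq_nonneg (x - y)),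
      mul_nonneg (mul_nonneg hq0'.le hs0) (sub_nonneg.mpr hxy)]
  · have hmono := sqrt_aux_mono (1 - 2 * ε) q ha hq0 hq1
    have hteq : Real.sqrt (1 - (1 - 2 * ε) ^ 2) = 2 * Real.sqrt (ε * (1 - ε)) := by
      have h4 : 1 - (1 - 2 * ε) ^ 2 = 2 ^ 2 * (ε * (1 - ε)) := by ring
      rw [h4, Real.sqrt_mul (by positivity), Real.sqrt_sq (by norm_num)]
    rw [hteq] at hmono
    linarith
end
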